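/- Let T be a symbol/check tree, let x be a symbol node of T, and let z be a check-rooted symbol/check subtree with erasure probability ε_z ∈ [0,1]. Let T' be the tree obtained from T by adding z as an additional check-node child of x. Then, with no further hypotheses, the erasure probability of the root of T' is less than or equal to the erasure probability of the root of T; i.e., attaching an additional check-node subtree to any symbol node can never increase the root erasure probability. -/

import Mathlib

/-- A symbol/check tree node: a symbol node carries an initial erasure
probability `eps0` and a (possibly empty) list of check-node children;
a check node carries a list of symbol-node children. -/
inductive SCTree : Type where
  | sym (eps0 : ℝ) (children : List SCTree) : SCTree
  | chk (children : List SCTree) : SCTree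

mutual
/-- Erasure probability of a node: `ε_v = ε⁰_v * ∏_c ε_c` for a symbol node,
`ε_c = 1 - ∏_w (1 - ε_w)` for a check node. -/
def SCTree.eps : SCTree → ℝ
  | .sym e cs => e * SCTree.prodEps cs
  | .chk ss => 1 - SCTree.prodOneSubEps ss

/-- `∏_c ε_c` over a list of nodes. -/
def SCTree.prodEps : List SCTree → ℝ
  | [] => 1
  | t :: ts => t.eps * SCTree.prodEps ts

/-- `∏_w (1 - ε_w)` over a list of nodes. -/
def SCTree.prodOneSubEps : List SCTree → ℝ
  | [] => 1
  | t :: ts => (1 - t.eps) * SCTree.prodOneSubEps ts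
end

mutual
/-- Well-formed symbol-rooted symbol/check tree: the root is a symbol node,
its initial erasure probability lies in `[0,1]`, and all children are
well-formed check-rooted trees. -/
inductive SCTree.WFSym : SCTree → Prop where
  | mk (e : ℝ) (cs : List SCTree) : 0 ≤ e → e ≤ 1 →
      (∀ c ∈ cs, SCTree.WFChk c) → SCTree.WFSym (.sym e cs)

/-- Well-formed check-rooted symbol/check tree: the root is a check node with
a nonempty list of well-formed symbol-rooted children. -/
inductive SCTree.WFChk : SCTree → Prop where
  | mk (ss : List SCTree) : ss ≠ [] →
      (∀ s ∈ ss, SCTree.WFSym s) → SCTree.WFChk (.chk ss)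
end

/-- `SCTree.Graft z T T'` : the tree `T'` is obtained from the tree `T` by
adding `z` as an additional check-node child of some symbol node of `T`
(no further conditions). -/
inductive SCTree.Graft (z : SCTree) : SCTree → SCTree → Prop where
  | here (e : ℝ) (cs : List SCTree) :
      SCTree.Graft z (.sym e cs) (.sym e (z :: cs))
  | sym (e : ℝ) (l r : List SCTree) (c c' : SCTree) :
      SCTree.Graft z c c' →
      SCTree.Graft z (.sym e (l ++ c :: r)) (.sym e (l ++ c' :: r))
  | chk (l r : List SCTree) (s s' : SCTree) :
      SCTree.Graft z s s' →
      SCTree.Graft z (.chk (l ++ s :: r)) (.chk (l ++ s' :: r))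

/-! Grafting `z` below a symbol node multiplies that node's erasure probability by
`ε_z ≤ 1`. Along the path back to the root, each symbol node is a nonnegative multiple
of its child on the path, and each check node `c` satisfies `1 - ε_c = (1 - ε_w) · Y`
with `Y ∈ [0,1]` for its child `w` on the path, so both are monotone in that child. -/

open scoped unitInterval

namespace SCTree

theorem prodEps_eq_prod (cs : List SCTree) : prodEps cs = (cs.map eps).prod := by
  induction cs <;> simp [prodEps, *]

theorem prodOneSubEps_eq_prod (ss : List SCTree) :
    prodOneSubEps ss = (ss.map (1 - ·.eps)).prod := by
  induction ss <;> simp [prodOneSubEps, *]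

theorem eps_sym_mem {e : ℝ} {cs : List SCTree} (he : e ∈ I) (hcs : ∀ c ∈ cs, c.eps ∈ I) :
    (sym e cs).eps ∈ I := by
  rw [eps, prodEps_eq_prod]
  exact unitInterval.mul_mem he <| list_prod_mem (S := unitInterval.submonoid) <| by
    simpa using hcs

theorem eps_chk_mem {ss : List SCTree} (hss : ∀ s ∈ ss, s.eps ∈ I) : (chk ss).eps ∈ I := by
  rw [eps, prodOneSubEps_eq_prod, ← Set.Icc.mem_iff_one_sub_mem]
  exact list_prod_mem (S := unitInterval.submonoid) <| by
    simpa [Set.Icc.mem_iff_one_sub_mem, and_comm] using hss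

mutual
theorem WFSym.eps_mem {t : SCTree} : t.WFSym → t.eps ∈ I
  | .mk _ _ h0 h1 hcs => eps_sym_mem ⟨h0, h1⟩ fun c hc => (hcs c hc).eps_mem

theorem WFChk.eps_mem {t : SCTree} : t.WFChk → t.eps ∈ I
  | .mk _ _ hss => eps_chk_mem fun s hs => (hss s hs).eps_mem
end

theorem eps_sym_append_cons (e : ℝ) (l r : List SCTree) (c : SCTree) :
    (sym e (l ++ c :: r)).eps = c.eps * (sym e (l ++ r)).eps := by
  simp only [eps, prodEps_eq_prod, List.map_append, List.map_cons, List.prod_append,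
    List.prod_cons]
  ring

theorem one_sub_eps_chk_append_cons (l r : List SCTree) (s : SCTree) :
    1 - (chk (l ++ s :: r)).eps = (1 - s.eps) * (1 - (chk (l ++ r)).eps) := by
  simp only [eps, prodOneSubEps_eq_prod, List.map_append, List.map_cons, List.prod_append,
    List.prod_cons, sub_sub_cancel]
  ring

theorem Graft.eps_mem_Icc {z T T' : SCTree} (hz : z.eps ∈ I) (hg : Graft z T T')
    (hT : T.WFSym ∨ T.WFChk) : T'.eps ∈ Set.Icc 0 T.eps := by
  induction hg with
  | here e cs =>
    have hT : (SCTree.sym e cs).eps ∈ I := hT.elim WFSym.eps_mem nofun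
    rw [← List.nil_append (z :: cs), eps_sym_append_cons, List.nil_append]
    exact ⟨mul_nonneg hz.1 hT.1, mul_le_of_le_one_left hT.1 hz.2⟩
  | sym e l r c c' _ ih =>
    obtain ⟨_, _, h0, h1, hcs⟩ := hT.resolve_right nofun
    have hc := ih (.inr (hcs c (by simp)))
    have hrest : (SCTree.sym e (l ++ r)).eps ∈ I :=
      eps_sym_mem ⟨h0, h1⟩ fun d hd => (hcs d (by simp at hd ⊢; tauto)).eps_mem
    rw [eps_sym_append_cons, eps_sym_append_cons]
    exact ⟨mul_nonneg hc.1 hrest.1, mul_le_mul_of_nonneg_right hc.2 hrest.1⟩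
  | chk l r s s' _ ih =>
    obtain ⟨_, _, hss⟩ := hT.resolve_left nofun
    have hs := ih (.inl (hss s (by simp)))
    have hrest : 1 - (SCTree.chk (l ++ r)).eps ∈ I := Set.Icc.mem_iff_one_sub_mem.mp <|
      eps_chk_mem fun d hd => (hss d (by simp at hd ⊢; tauto)).eps_mem
    have hmono : (1 - s.eps) * (1 - (SCTree.chk (l ++ r)).eps) ≤
        (1 - s'.eps) * (1 - (SCTree.chk (l ++ r)).eps) :=
      mul_le_mul_of_nonneg_right (by linarith [hs.2]) hrest.1
    have hle_one : (1 - s'.eps) * (1 - (SCTree.chk (l ++ r)).eps) ≤ 1 :=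
      mul_le_one₀ (by linarith [hs.1, hs.2, (hss s (by simp)).eps_mem.2]) hrest.1 hrest.2
    have := one_sub_eps_chk_append_cons l r s
    have := one_sub_eps_chk_append_cons l r s'
    constructor <;> linarith

end SCTree

/-- **Theorem 2 (BEC analog): attaching an extra check-node subtree never
increases the root erasure probability.**  Let `T` be a well-formed
symbol/check tree, `x` a symbol node of `T`, and `z` a well-formed
check-rooted symbol/check subtree with erasure probability `ε_z ∈ [0,1]`.
Let `T'` be obtained from `T` by adding `z` as an additional check-node
child of `x` (relation `SCTree.Graft`).  Then, with no further hypotheses,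
the erasure probability of the root of `T'` is `≤` the erasure probability
of the root of `T`. -/
theorem graft_check_le (z T T' : SCTree)
    (hT : T.WFSym) (hz : z.WFChk) (hz01 : z.eps ∈ Set.Icc (0 : ℝ) 1)
    (hgraft : SCTree.Graft z T T') :
    T'.eps ≤ T.eps :=
  (hgraft.eps_mem_Icc hz01 (.inl hT)).2
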